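/- arXiv:2403.03362 — 6 statements merged into one kernel-verified Lean document; each statement's English description precedes it below -/
import Mathlib

section
/- Let f : ℝ^d → ℝ be differentiable and convex. Then for any w ∈ ℝ^d and any t ≥ 0, the gradient norm is non-decreasing along the gradient direction: ‖∇f(w + t∇f(w))‖ ≥ ‖∇f(w)‖. -/
/-!
Restricted to the ray `s ↦ w + s • ∇f(w)`, `f` is a convex function of one variable, so its
derivative `⟪∇f(w + s • ∇f(w)), ∇f(w)⟫` is nondecreasing in `s`. Comparing `s = 0` with `s = t`
gives `‖∇f(w)‖² ≤ ⟪∇f(w + t • ∇f(w)), ∇f(w)⟫`, and Cauchy–Schwarz finishes.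
-/

open Set

section Ray

variable {E : Type*} [NormedAddCommGroup E] [NormedSpace ℝ E] {f : E → ℝ} {s : Set E}

theorem ConvexOn.comp_ray (hf : ConvexOn ℝ s f) (x v : E) :
    ConvexOn ℝ ((fun t : ℝ ↦ x + t • v) ⁻¹' s) (fun t ↦ f (x + t • v)) := by
  have hline : ⇑(AffineMap.lineMap x (x + v) : ℝ →ᵃ[ℝ] E) = fun t ↦ x + t • v := by
    ext t
    simp [AffineMap.lineMap_apply_module', add_comm]
  have := hf.comp_affineMap (AffineMap.lineMap x (x + v))
  rwa [hline] at this

theorem ConvexOn.fderiv_apply_le_fderiv_apply_add_smul (hf : ConvexOn ℝ s f) {x v : E} {t : ℝ}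
    (ht : 0 ≤ t) (hx : x ∈ s) (hxt : x + t • v ∈ s)
    (hfx : DifferentiableAt ℝ f x) (hfxt : DifferentiableAt ℝ f (x + t • v)) :
    fderiv ℝ f x v ≤ fderiv ℝ f (x + t • v) v := by
  rcases ht.eq_or_lt with rfl | ht
  · simp
  have hray : ∀ r : ℝ, DifferentiableAt ℝ f (x + r • v) →
      HasDerivAt (fun r ↦ f (x + r • v)) (fderiv ℝ f (x + r • v) v) r := fun r hr ↦ by
    have hline : HasDerivAt (fun r : ℝ ↦ x + r • v) v r := by
      simpa using ((hasDerivAt_id r).smul_const v).const_add x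
    exact hr.hasFDerivAt.comp_hasDerivAt r hline
  have h0 : (0 : ℝ) ∈ (fun r : ℝ ↦ x + r • v) ⁻¹' s := by simpa using hx
  calc fderiv ℝ f x v
      ≤ slope (fun r ↦ f (x + r • v)) 0 t :=
        (hf.comp_ray x v).le_slope_of_hasDerivAt h0 hxt ht (by simpa using hray 0 (by simpa))
    _ ≤ fderiv ℝ f (x + t • v) v :=
        (hf.comp_ray x v).slope_le_of_hasDerivAt h0 hxt ht (hray t hfxt)

end Ray

theorem norm_le_norm_of_inner_self_le_inner {F : Type*} [NormedAddCommGroup F]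
    [InnerProductSpace ℝ F] {u a : F} (h : inner ℝ u u ≤ inner ℝ a u) : ‖u‖ ≤ ‖a‖ := by
  rcases eq_or_ne u 0 with rfl | hu
  · simp
  refine le_of_mul_le_mul_right ?_ (norm_pos_iff.mpr hu)
  calc ‖u‖ * ‖u‖ = inner ℝ u u := (real_inner_self_eq_norm_mul_norm u).symm
    _ ≤ inner ℝ a u := h
    _ ≤ ‖a‖ * ‖u‖ := real_inner_le_norm a u

theorem gradient_norm_nondecreasing_along_gradient
    {d : ℕ} (f : EuclideanSpace ℝ (Fin d) → ℝ)
    (hdiff : Differentiable ℝ f) (hconv : ConvexOn ℝ Set.univ f)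
    (w : EuclideanSpace ℝ (Fin d)) (t : ℝ) (ht : 0 ≤ t) :
    ‖gradient f w‖ ≤ ‖gradient f (w + t • gradient f w)‖ := by
  apply norm_le_norm_of_inner_self_le_inner
  simpa only [inner_gradient_left] using
    hconv.fderiv_apply_le_fderiv_apply_add_smul ht (mem_univ _) (mem_univ _) (hdiff _) (hdiff _)
end

section
/- Let f : ℝ^d → ℝ be L-smooth and μ-strongly convex with minimizer w*. If at each iteration k we replace w_k by any point w_k⁺ with f(w_k⁺) ≤ f(w_k) and then set w_{k+1} = w_k⁺ - η_k ∇f(w_k⁺) with 0 < η_k < 2/L, then f(w_K) - f(w*) ≤ ∏_{i=0}^{K-1} [1 - 2μη_i(1 - η_i L/2)] · (f(w_0) - f(w*)). -/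
/-!
Smoothness gives the descent inequality `f (x - η ∇f x) ≤ f x - η (1 - η L / 2) ‖∇f x‖²`, and
minimizing the strong-convexity lower bound over `y` gives the Polyak–Łojasiewicz inequality
`‖∇f x‖² ≥ 2 μ (f x - f y)`, for every `y`. Together they shrink the gap `f - f y` by the factor
`1 - 2 μ η (1 - η L / 2)` at each gradient step, and teleporting beforehand only lowers the gap.
Comparing the two quadratic bounds on `f` shows `μ ≤ L`, which makes these factors nonnegative,
so the one-step contractions can be chained.
-/

open RealInnerProductSpace Finset

noncomputable def contractionFactor (μ L η : ℝ) : ℝ := 1 - 2 * μ * η * (1 - η * L / 2)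

theorem contractionFactor_nonneg {μ L : ℝ} (hμ : 0 ≤ μ) (hμL : μ ≤ L) (η : ℝ) :
    0 ≤ contractionFactor μ L η := by
  have key : contractionFactor μ L η = (1 - μ * η) ^ 2 + μ * η ^ 2 * (L - μ) := by
    unfold contractionFactor; ring
  rw [key]
  have := mul_nonneg (mul_nonneg hμ (sq_nonneg η)) (sub_nonneg.2 hμL)
  positivity

theorem le_prod_mul_of_le_mul {e c : ℕ → ℝ} (hc : ∀ k, 0 ≤ c k)
    (he : ∀ k, e (k + 1) ≤ c k * e k) (K : ℕ) :
    e K ≤ (∏ i ∈ range K, c i) * e 0 := by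
  induction K with
  | zero => simp
  | succ n ih =>
    calc e (n + 1) ≤ c n * e n := he n
      _ ≤ c n * ((∏ i ∈ range n, c i) * e 0) := mul_le_mul_of_nonneg_left ih (hc n)
      _ = (∏ i ∈ range (n + 1), c i) * e 0 := by rw [prod_range_succ]; ring

section Gradient

variable {E : Type*} [NormedAddCommGroup E] [InnerProductSpace ℝ E] [CompleteSpace E]
  {f : E → ℝ} {L μ : ℝ}

theorem descent_lemma (hdiff : Differentiable ℝ f)
    (hlip : ∀ x y, ‖gradient f x - gradient f y‖ ≤ L * ‖x - y‖) (x y : E) :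
    f y ≤ f x + ⟪gradient f x, y - x⟫ + L / 2 * ‖y - x‖ ^ 2 := by
  set v := y - x
  set φ : ℝ → ℝ := fun t => f (x + t • v) - t * ⟪gradient f x, v⟫ - L / 2 * t ^ 2 * ‖v‖ ^ 2
  have hφ' : ∀ t, HasDerivAt φ
      (⟪gradient f (x + t • v), v⟫ - ⟪gradient f x, v⟫ - L * t * ‖v‖ ^ 2) t := by
    intro t
    have hline : HasDerivAt (fun t : ℝ => x + t • v) v t := by
      simpa using ((hasDerivAt_id t).smul_const v).const_add x
    have hf := (hdiff (x + t • v)).hasGradientAt.hasFDerivAt.comp_hasDerivAt t hline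
    have hlin := (hasDerivAt_id t).mul_const ⟪gradient f x, v⟫
    have hquad := ((hasDerivAt_pow 2 t).const_mul (L / 2)).mul_const (‖v‖ ^ 2)
    refine ((hf.sub hlin).sub hquad).congr_deriv ?_
    simp only [InnerProductSpace.toDual_apply_apply, Nat.cast_ofNat]
    ring
  have hφ'_nonpos : ∀ t ∈ Set.Icc (0 : ℝ) 1,
      ⟪gradient f (x + t • v), v⟫ - ⟪gradient f x, v⟫ - L * t * ‖v‖ ^ 2 ≤ 0 := by
    intro t ht
    have hgrad : ‖gradient f (x + t • v) - gradient f x‖ ≤ L * (t * ‖v‖) := by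
      simpa [norm_smul, abs_of_nonneg ht.1] using hlip (x + t • v) x
    rw [sub_nonpos, ← inner_sub_left]
    calc ⟪gradient f (x + t • v) - gradient f x, v⟫
        ≤ ‖gradient f (x + t • v) - gradient f x‖ * ‖v‖ := real_inner_le_norm _ _
      _ ≤ L * (t * ‖v‖) * ‖v‖ := by gcongr
      _ = L * t * ‖v‖ ^ 2 := by ring
  have hanti : AntitoneOn φ (Set.Icc 0 1) :=
    antitoneOn_of_hasDerivWithinAt_nonpos (convex_Icc 0 1)
      (fun t _ => (hφ' t).continuousAt.continuousWithinAt)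
      (fun t _ => (hφ' t).hasDerivWithinAt)
      (fun t ht => hφ'_nonpos t (interior_subset ht))
  have h01 : φ 1 ≤ φ 0 := hanti (by simp) (by simp) zero_le_one
  simp only [φ, one_smul, zero_smul, add_zero, one_mul, one_pow, mul_one, zero_mul, zero_pow,
    ne_eq, OfNat.ofNat_ne_zero, not_false_eq_true, mul_zero, sub_zero, v, add_sub_cancel] at h01
  linarith

theorem gradient_step_le (hdiff : Differentiable ℝ f)
    (hlip : ∀ x y, ‖gradient f x - gradient f y‖ ≤ L * ‖x - y‖) (x : E) (η : ℝ) :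
    f (x - η • gradient f x) ≤ f x - η * (1 - η * L / 2) * ‖gradient f x‖ ^ 2 := by
  have h := descent_lemma hdiff hlip x (x - η • gradient f x)
  rw [sub_sub_cancel_left, inner_neg_right, real_inner_smul_right, real_inner_self_eq_norm_sq,
    norm_neg, norm_smul, Real.norm_eq_abs, mul_pow, sq_abs] at h
  linarith

theorem two_mul_sub_le_norm_gradient_sq (hμ : 0 ≤ μ)
    (hsc : ∀ x y, f y ≥ f x + ⟪gradient f x, y - x⟫ + μ / 2 * ‖y - x‖ ^ 2) (x y : E) :
    2 * μ * (f x - f y) ≤ ‖gradient f x‖ ^ 2 := by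
  have hsq : 0 ≤ ‖gradient f x + μ • (y - x)‖ ^ 2 := sq_nonneg _
  rw [norm_add_sq_real, real_inner_smul_right, norm_smul, Real.norm_eq_abs, mul_pow, sq_abs] at hsq
  nlinarith [mul_le_mul_of_nonneg_left (hsc x y) hμ]

theorem le_of_strongConvex_of_lipschitz_gradient [Nontrivial E] (hdiff : Differentiable ℝ f)
    (hlip : ∀ x y, ‖gradient f x - gradient f y‖ ≤ L * ‖x - y‖)
    (hsc : ∀ x y, f y ≥ f x + ⟪gradient f x, y - x⟫ + μ / 2 * ‖y - x‖ ^ 2) : μ ≤ L := by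
  obtain ⟨u, hu⟩ := exists_ne (0 : E)
  have hupper := descent_lemma hdiff hlip 0 u
  have hlower := hsc 0 u
  rw [sub_zero] at hupper hlower
  have hu_pos : 0 < ‖u‖ ^ 2 := pow_pos (norm_pos_iff.2 hu) 2
  nlinarith

theorem gradient_step_gap_le (hdiff : Differentiable ℝ f)
    (hlip : ∀ x y, ‖gradient f x - gradient f y‖ ≤ L * ‖x - y‖) (hμ : 0 ≤ μ)
    (hsc : ∀ x y, f y ≥ f x + ⟪gradient f x, y - x⟫ + μ / 2 * ‖y - x‖ ^ 2)
    {η : ℝ} (hη : 0 ≤ η) (hηL : η * L ≤ 2) (x y : E) :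
    f (x - η • gradient f x) - f y ≤ contractionFactor μ L η * (f x - f y) := by
  have hstep := gradient_step_le hdiff hlip x η
  have hpl := two_mul_sub_le_norm_gradient_sq hμ hsc x y
  have hrate : 0 ≤ η * (1 - η * L / 2) := mul_nonneg hη (by linarith)
  unfold contractionFactor
  nlinarith [mul_le_mul_of_nonneg_left hpl hrate]

end Gradient

theorem gd_with_teleportation_sc_rate_general
    {d : ℕ} (f : EuclideanSpace ℝ (Fin d) → ℝ) (L μ : ℝ)
    (hL : 0 < L) (hμ : 0 < μ)
    (hdiff : Differentiable ℝ f)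
    (hlip : ∀ x y, ‖gradient f x - gradient f y‖ ≤ L * ‖x - y‖)
    (hsc : ∀ x y, f y ≥ f x + ⟪gradient f x, y - x⟫ + μ / 2 * ‖y - x‖ ^ 2)
    (wstar : EuclideanSpace ℝ (Fin d))
    (w wp : ℕ → EuclideanSpace ℝ (Fin d)) (η : ℕ → ℝ)
    (hη : ∀ k, 0 < η k ∧ η k < 2 / L)
    (htel : ∀ k, f (wp k) ≤ f (w k))
    (hupd : ∀ k, w (k + 1) = wp k - η k • gradient f (wp k))
    (K : ℕ) :
    f (w K) - f wstar ≤
      (∏ i ∈ Finset.range K, (1 - 2 * μ * η i * (1 - η i * L / 2))) *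
        (f (w 0) - f wstar) := by
  rcases subsingleton_or_nontrivial (EuclideanSpace ℝ (Fin d)) with _ | _
  · -- on the zero space `μ ≤ L` may fail, but every gap vanishes
    rw [Subsingleton.elim (w K) wstar, Subsingleton.elim (w 0) wstar]
    simp
  have hμL : μ ≤ L := le_of_strongConvex_of_lipschitz_gradient hdiff hlip hsc
  have hc : ∀ k, 0 ≤ contractionFactor μ L (η k) :=
    fun k => contractionFactor_nonneg hμ.le hμL (η k)
  refine le_prod_mul_of_le_mul (e := fun k => f (w k) - f wstar) hc (fun k => ?_) K
  obtain ⟨hη0, hη2⟩ := hη k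
  have hηL : η k * L ≤ 2 := ((lt_div_iff₀ hL).1 hη2).le
  calc f (w (k + 1)) - f wstar
      ≤ contractionFactor μ L (η k) * (f (wp k) - f wstar) := by
        rw [hupd k]
        exact gradient_step_gap_le hdiff hlip hμ.le hsc hη0.le hηL (wp k) wstar
    _ ≤ contractionFactor μ L (η k) * (f (w k) - f wstar) := by
        gcongr
        · exact hc k
        · exact htel k

theorem gd_with_teleportation_sc_rate
    {d : ℕ} (f : EuclideanSpace ℝ (Fin d) → ℝ) (L μ : ℝ)
    (hL : 0 < L) (hμ : 0 < μ)
    (hdiff : Differentiable ℝ f)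
    (hlip : ∀ x y, ‖gradient f x - gradient f y‖ ≤ L * ‖x - y‖)
    (hsc : ∀ x y, f y ≥ f x + ⟪gradient f x, y - x⟫ + μ / 2 * ‖y - x‖ ^ 2)
    (wstar : EuclideanSpace ℝ (Fin d)) (hmin : IsMinOn f Set.univ wstar)
    (w wp : ℕ → EuclideanSpace ℝ (Fin d)) (η : ℕ → ℝ)
    (hη : ∀ k, 0 < η k ∧ η k < 2 / L)
    (htel : ∀ k, f (wp k) ≤ f (w k))
    (hupd : ∀ k, w (k + 1) = wp k - η k • gradient f (wp k))
    (K : ℕ) :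
    f (w K) - f wstar ≤
      (∏ i ∈ Finset.range K, (1 - 2 * μ * η i * (1 - η i * L / 2))) *
        (f (w 0) - f wstar) :=
  gd_with_teleportation_sc_rate_general f L μ hL hμ hdiff hlip hsc wstar w wp η hη htel hupd K
end

section
/- Let f : ℝ^d → ℝ be L-smooth and μ-strongly convex with minimizer w*, and let T: ℝ^d → ℝ^d be any non-expansive map with fixed point w* satisfying f(T(w)) ≤ f(w). Then GD interleaved with applications of T, i.e. w_{k+1} = T(w_k) - η_k∇f(T(w_k)), satisfies f(w_K) - f(w*) ≤ (L/μ)·∏_{i=0}^{K-1} max{(1-η_iL)², (1-η_iμ)²}·(f(w_0) - f(w*)). -/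
/-!
Put `h = f - (μ/2)‖·‖²` and `g = ∇f - μ • id`. Strong convexity makes `h` convex and smoothness
gives it the quadratic upper bound with constant `L - μ`; hence `g` is monotone, bounded by
`L - μ` along `x - y`, and cocoercive: `‖g x - g y‖² ≤ (L - μ) ⟪g x - g y, x - y⟫`.
A gradient step maps `p - q` to `(1 - ημ)(p - q) - η (g p - g q)`, whose squared norm is then
bounded by an affine function of `c = ⟪g p - g q, p - q⟫ ∈ [0, (L - μ)‖p - q‖²]`; its values at
the two endpoints are `(1 - ημ)²‖p - q‖²` and `(1 - ηL)²‖p - q‖²`. As `T` is non-expansive and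
fixes the stationary point `w*`, `‖w_k - w*‖²` contracts by the product of these factors, and
`(μ/2)‖w - w*‖² ≤ f w - f w* ≤ (L/2)‖w - w*‖²` converts distances into function values.
-/

open RealInnerProductSpace

variable {E : Type*} [NormedAddCommGroup E] [InnerProductSpace ℝ E]

theorem norm_sq_sub_norm_sq_sub_two_inner (x y : E) :
    ‖y‖ ^ 2 - ‖x‖ ^ 2 - 2 * ⟪x, y - x⟫ = ‖y - x‖ ^ 2 := by
  rw [norm_sub_sq_real, inner_sub_right, real_inner_self_eq_norm_sq, real_inner_comm]
  ring

section FirstOrder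

variable {h : E → ℝ} {g : E → E} {κ : ℝ}

theorem inner_sub_nonneg_of_add_inner_le (hconv : ∀ x y, h x + ⟪g x, y - x⟫ ≤ h y) (x y : E) :
    0 ≤ ⟪g x - g y, x - y⟫ := by
  have hxy := hconv x y
  have hyx := hconv y x
  rw [← neg_sub x y, inner_neg_right] at hxy
  rw [inner_sub_left]
  linarith

theorem inner_sub_le_of_le_add_inner_add_sq
    (hdesc : ∀ x y, h y ≤ h x + ⟪g x, y - x⟫ + κ / 2 * ‖y - x‖ ^ 2) (x y : E) :
    ⟪g x - g y, x - y⟫ ≤ κ * ‖x - y‖ ^ 2 := by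
  have hxy := hdesc x y
  have hyx := hdesc y x
  rw [← neg_sub x y, inner_neg_right, norm_neg] at hxy
  rw [inner_sub_left]
  linarith

theorem mul_two_sub_mul_norm_sq_le_inner (hconv : ∀ x y, h x + ⟪g x, y - x⟫ ≤ h y)
    (hdesc : ∀ x y, h y ≤ h x + ⟪g x, y - x⟫ + κ / 2 * ‖y - x‖ ^ 2) (x y : E) (t : ℝ) :
    t * (2 - κ * t) * ‖g x - g y‖ ^ 2 ≤ ⟪g x - g y, x - y⟫ := by
  set D := g x - g y with hD
  -- compare `h` at `y + t • D` and at `x - t • D` through both inequalities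
  have h₁ := hconv x (y + t • D)
  have h₂ := hdesc y (y + t • D)
  have h₃ := hconv y (x - t • D)
  have h₄ := hdesc x (x - t • D)
  have hDD : ⟪g x, D⟫ - ⟪g y, D⟫ = ‖D‖ ^ 2 := by
    rw [← inner_sub_left, ← hD, real_inner_self_eq_norm_sq]
  simp only [add_sub_cancel_left, sub_sub_cancel_left, norm_neg, norm_smul, mul_pow,
    Real.norm_eq_abs, sq_abs, inner_add_right, inner_sub_right, inner_neg_right,
    real_inner_smul_right] at h₁ h₂ h₃ h₄
  rw [inner_sub_left, inner_sub_right, inner_sub_right]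
  linear_combination h₁ + h₂ + h₃ + h₄ - 2 * t * hDD

theorem norm_sq_sub_le_mul_inner (hconv : ∀ x y, h x + ⟪g x, y - x⟫ ≤ h y)
    (hdesc : ∀ x y, h y ≤ h x + ⟪g x, y - x⟫ + κ / 2 * ‖y - x‖ ^ 2) (x y : E) :
    ‖g x - g y‖ ^ 2 ≤ κ * ⟪g x - g y, x - y⟫ := by
  rcases lt_or_ge 0 κ with hκ | hκ
  · have h₁ := mul_two_sub_mul_norm_sq_le_inner hconv hdesc x y κ⁻¹
    rw [mul_inv_cancel₀ hκ.ne'] at h₁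
    calc ‖g x - g y‖ ^ 2 = κ * (κ⁻¹ * (2 - 1) * ‖g x - g y‖ ^ 2) := by field_simp; ring
      _ ≤ κ * ⟪g x - g y, x - y⟫ := by gcongr
  · have hc : ⟪g x - g y, x - y⟫ = 0 :=
      le_antisymm ((inner_sub_le_of_le_add_inner_add_sq hdesc x y).trans
        (mul_nonpos_of_nonpos_of_nonneg hκ (sq_nonneg _)))
        (inner_sub_nonneg_of_add_inner_le hconv x y)
    have h₁ := mul_two_sub_mul_norm_sq_le_inner hconv hdesc x y 1
    rw [hc] at h₁ ⊢
    nlinarith [sq_nonneg ‖g x - g y‖]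

end FirstOrder

theorem quadratic_step_le_max_mul {L μ η c τ r : ℝ} (hr : 0 ≤ r) (hc₀ : 0 ≤ c)
    (hc : c ≤ (L - μ) * r) (hτ : τ ≤ (L - μ) * c) :
    (1 - η * μ) ^ 2 * r - 2 * (η * (1 - η * μ)) * c + η ^ 2 * τ
      ≤ max ((1 - η * L) ^ 2) ((1 - η * μ) ^ 2) * r := by
  set s := η * (η * (L + μ) - 2)
  have hlin : (1 - η * μ) ^ 2 * r - 2 * (η * (1 - η * μ)) * c + η ^ 2 * τ
      ≤ (1 - η * μ) ^ 2 * r + s * c := by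
    nlinarith [mul_le_mul_of_nonneg_left hτ (sq_nonneg η)]
  refine hlin.trans ?_
  rcases le_or_gt s 0 with hs | hs
  · calc (1 - η * μ) ^ 2 * r + s * c ≤ (1 - η * μ) ^ 2 * r := by nlinarith
      _ ≤ _ := by gcongr; exact le_max_right _ _
  · calc (1 - η * μ) ^ 2 * r + s * c ≤ (1 - η * μ) ^ 2 * r + s * ((L - μ) * r) := by gcongr
      _ = (1 - η * L) ^ 2 * r := by ring
      _ ≤ _ := by gcongr; exact le_max_left _ _

section Smooth

variable [CompleteSpace E] {f : E → ℝ} {L μ : ℝ}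

theorem Differentiable.hasDerivAt_comp_add_smul (hf : Differentiable ℝ f) (x v : E) (t : ℝ) :
    HasDerivAt (fun s : ℝ => f (x + s • v)) ⟪gradient f (x + t • v), v⟫ t := by
  have hline : HasDerivAt (fun s : ℝ => x + s • v) v t := by
    simpa using ((hasDerivAt_id t).smul_const v).const_add x
  rw [gradient, InnerProductSpace.toDual_symm_apply]
  exact (hf (x + t • v)).hasFDerivAt.comp_hasDerivAt t hline

theorem le_add_inner_gradient_add_sq_of_lipschitz (hf : Differentiable ℝ f)
    (hlip : ∀ x y, ‖gradient f x - gradient f y‖ ≤ L * ‖x - y‖) (x y : E) :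
    f y ≤ f x + ⟪gradient f x, y - x⟫ + L / 2 * ‖y - x‖ ^ 2 := by
  set v := y - x
  have hderiv (t : ℝ) : HasDerivAt (fun s : ℝ => f (x + s • v) - s * ⟪gradient f x, v⟫)
      (⟪gradient f (x + t • v), v⟫ - ⟪gradient f x, v⟫) t := by
    simpa only [one_mul] using
      (hf.hasDerivAt_comp_add_smul x v t).fun_sub ((hasDerivAt_id' t).mul_const ⟪gradient f x, v⟫)
  have hbound (t : ℝ) (ht : t ∈ Set.Ico (0 : ℝ) 1) :
      ⟪gradient f (x + t • v), v⟫ - ⟪gradient f x, v⟫ ≤ L * t * ‖v‖ ^ 2 := by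
    calc ⟪gradient f (x + t • v), v⟫ - ⟪gradient f x, v⟫
        = ⟪gradient f (x + t • v) - gradient f x, v⟫ := (inner_sub_left _ _ _).symm
      _ ≤ ‖gradient f (x + t • v) - gradient f x‖ * ‖v‖ := real_inner_le_norm _ _
      _ ≤ L * ‖x + t • v - x‖ * ‖v‖ := by gcongr; exact hlip _ _
      _ = L * t * ‖v‖ ^ 2 := by
        rw [add_sub_cancel_left, norm_smul, Real.norm_of_nonneg ht.1]; ring
  have key := image_le_of_deriv_right_le_deriv_boundary
    (fun t _ => (hderiv t).continuousAt.continuousWithinAt)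
    (fun t _ => (hderiv t).hasDerivWithinAt)
    (B := fun t => f x + L / 2 * t ^ 2 * ‖v‖ ^ 2) (by simp)
    (by fun_prop) (fun t _ => ?_) hbound (Set.right_mem_Icc.2 zero_le_one)
  · simp only [one_smul, one_mul, one_pow, v, add_sub_cancel] at key
    linarith
  · exact (((hasDerivAt_pow 2 t).const_mul (L / 2)).mul_const (‖v‖ ^ 2)).const_add (f x)
      |>.hasDerivWithinAt.congr_deriv (by ring)

theorem add_inner_le_sub_sq_of_strongConvex
    (hsc : ∀ x y, f y ≥ f x + ⟪gradient f x, y - x⟫ + μ / 2 * ‖y - x‖ ^ 2) (x y : E) :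
    f x - μ / 2 * ‖x‖ ^ 2 + ⟪gradient f x - μ • x, y - x⟫ ≤ f y - μ / 2 * ‖y‖ ^ 2 := by
  have := norm_sq_sub_norm_sq_sub_two_inner x y
  rw [inner_sub_left, real_inner_smul_left]
  linear_combination hsc x y + μ / 2 * this

theorem sub_sq_le_add_inner_add_sq_of_lipschitz (hf : Differentiable ℝ f)
    (hlip : ∀ x y, ‖gradient f x - gradient f y‖ ≤ L * ‖x - y‖) (x y : E) :
    f y - μ / 2 * ‖y‖ ^ 2
      ≤ f x - μ / 2 * ‖x‖ ^ 2 + ⟪gradient f x - μ • x, y - x⟫ + (L - μ) / 2 * ‖y - x‖ ^ 2 := by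
  have := norm_sq_sub_norm_sq_sub_two_inner x y
  rw [inner_sub_left, real_inner_smul_left]
  linear_combination le_add_inner_gradient_add_sq_of_lipschitz hf hlip x y - μ / 2 * this

theorem norm_sq_gradient_step_sub_le (hf : Differentiable ℝ f)
    (hlip : ∀ x y, ‖gradient f x - gradient f y‖ ≤ L * ‖x - y‖)
    (hsc : ∀ x y, f y ≥ f x + ⟪gradient f x, y - x⟫ + μ / 2 * ‖y - x‖ ^ 2) (η : ℝ) (p q : E) :
    ‖(p - η • gradient f p) - (q - η • gradient f q)‖ ^ 2
      ≤ max ((1 - η * L) ^ 2) ((1 - η * μ) ^ 2) * ‖p - q‖ ^ 2 := by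
  set g : E → E := fun x => gradient f x - μ • x
  have hconv := add_inner_le_sub_sq_of_strongConvex hsc
  have hdesc := sub_sq_le_add_inner_add_sq_of_lipschitz (μ := μ) hf hlip
  have hstep : (p - η • gradient f p) - (q - η • gradient f q)
      = (1 - η * μ) • (p - q) - η • (g p - g q) := by
    simp only [g]; module
  rw [hstep, norm_sub_sq_real, norm_smul, norm_smul, real_inner_smul_left,
    real_inner_smul_right, real_inner_comm (g p - g q)]
  simp only [Real.norm_eq_abs, mul_pow, sq_abs]
  have := quadratic_step_le_max_mul (η := η) (sq_nonneg ‖p - q‖)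
    (inner_sub_nonneg_of_add_inner_le (g := g) hconv p q)
    (inner_sub_le_of_le_add_inner_add_sq (g := g) hdesc p q)
    (norm_sq_sub_le_mul_inner (g := g) hconv hdesc p q)
  linarith

end Smooth

theorem le_prod_range_mul_of_le_mul {a m : ℕ → ℝ} (hm : ∀ k, 0 ≤ m k)
    (h : ∀ k, a (k + 1) ≤ m k * a k) (n : ℕ) : a n ≤ (∏ i ∈ Finset.range n, m i) * a 0 := by
  induction n with
  | zero => simp
  | succ n ih =>
    rw [Finset.prod_range_succ, mul_comm _ (m n), mul_assoc]
    exact (h n).trans (mul_le_mul_of_nonneg_left ih (hm n))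

theorem gd_with_nonexpansive_teleportation_rate_general
    {d : ℕ} (f : EuclideanSpace ℝ (Fin d) → ℝ) (L μ : ℝ)
    (hL : 0 < L) (hμ : 0 < μ)
    (hdiff : Differentiable ℝ f)
    (hlip : ∀ x y, ‖gradient f x - gradient f y‖ ≤ L * ‖x - y‖)
    (hsc : ∀ x y, f y ≥ f x + ⟪gradient f x, y - x⟫ + μ / 2 * ‖y - x‖ ^ 2)
    (wstar : EuclideanSpace ℝ (Fin d)) (hmin : IsMinOn f Set.univ wstar)
    (T : EuclideanSpace ℝ (Fin d) → EuclideanSpace ℝ (Fin d))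
    (hT : ∀ x y, ‖T x - T y‖ ≤ ‖x - y‖)
    (hTfix : T wstar = wstar)
    (w : ℕ → EuclideanSpace ℝ (Fin d)) (η : ℕ → ℝ)
    (hupd : ∀ k, w (k + 1) = T (w k) - η k • gradient f (T (w k)))
    (K : ℕ) :
    f (w K) - f wstar ≤
      (L / μ) * (∏ i ∈ Finset.range K, max ((1 - η i * L) ^ 2) ((1 - η i * μ) ^ 2)) *
        (f (w 0) - f wstar) := by
  have hg₀ : gradient f wstar = 0 := by
    simp [gradient, (hmin.isLocalMin Filter.univ_mem).fderiv_eq_zero]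
  have hcontract (k : ℕ) : ‖w (k + 1) - wstar‖ ^ 2
      ≤ max ((1 - η k * L) ^ 2) ((1 - η k * μ) ^ 2) * ‖w k - wstar‖ ^ 2 := by
    have hstep := norm_sq_gradient_step_sub_le hdiff hlip hsc (η k) (T (w k)) wstar
    rw [hg₀, smul_zero, sub_zero, ← hupd] at hstep
    refine hstep.trans ?_
    gcongr
    simpa only [hTfix] using hT (w k) wstar
  have hdist := le_prod_range_mul_of_le_mul (a := fun k => ‖w k - wstar‖ ^ 2)
    (fun i => (sq_nonneg _).trans (le_max_left _ _)) hcontract K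
  have hupper := le_add_inner_gradient_add_sq_of_lipschitz hdiff hlip wstar (w K)
  have hlower := hsc wstar (w 0)
  rw [hg₀, inner_zero_left] at hupper hlower
  set P := ∏ i ∈ Finset.range K, max ((1 - η i * L) ^ 2) ((1 - η i * μ) ^ 2)
  calc f (w K) - f wstar ≤ L / 2 * ‖w K - wstar‖ ^ 2 := by linarith
    _ ≤ L / 2 * (P * ‖w 0 - wstar‖ ^ 2) := by gcongr
    _ = L / μ * P * (μ / 2 * ‖w 0 - wstar‖ ^ 2) := by field_simp
    _ ≤ L / μ * P * (f (w 0) - f wstar) := by gcongr; linarith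

theorem gd_with_nonexpansive_teleportation_rate
    {d : ℕ} (f : EuclideanSpace ℝ (Fin d) → ℝ) (L μ : ℝ)
    (hL : 0 < L) (hμ : 0 < μ)
    (hdiff : Differentiable ℝ f)
    (hlip : ∀ x y, ‖gradient f x - gradient f y‖ ≤ L * ‖x - y‖)
    (hsc : ∀ x y, f y ≥ f x + ⟪gradient f x, y - x⟫ + μ / 2 * ‖y - x‖ ^ 2)
    (wstar : EuclideanSpace ℝ (Fin d)) (hmin : IsMinOn f Set.univ wstar)
    (T : EuclideanSpace ℝ (Fin d) → EuclideanSpace ℝ (Fin d))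
    (hT : ∀ x y, ‖T x - T y‖ ≤ ‖x - y‖)
    (hTfix : T wstar = wstar)
    (hTdec : ∀ x, f (T x) ≤ f x)
    (w : ℕ → EuclideanSpace ℝ (Fin d)) (η : ℕ → ℝ)
    (hupd : ∀ k, w (k + 1) = T (w k) - η k • gradient f (T (w k)))
    (K : ℕ) :
    f (w K) - f wstar ≤
      (L / μ) * (∏ i ∈ Finset.range K, max ((1 - η i * L) ^ 2) ((1 - η i * μ) ^ 2)) *
        (f (w 0) - f wstar) :=
  gd_with_nonexpansive_teleportation_rate_general f L μ hL hμ hdiff hlip hsc wstar hmin T hT hTfix w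
    η hupd K
end

section
/- The second-order Huber function h₂(x) = -x⁴/8 + 3x²/4 + 3/8 for |x| < 1 and h₂(x) = |x| otherwise, is twice continuously differentiable and convex on ℝ. -/
/-!
On `[-1, 1]` the function `h₂` is the quartic `P(y) = -y⁴/8 + 3y²/4 + 3/8`, and outside it
continues along the tangent lines of `P` at `±1` (which are `y ↦ ±y`). Such a tangent continuation
is always differentiable, with derivative `P'` composed with the clamp to `[-1, 1]`. Because
`P''(±1) = 0`, the clamped `P'` is in turn the tangent continuation of `P'`, so its derivative is
the clamped `P''`, which is continuous and equals `3(1 - y²)/2 ≥ 0`.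
-/

/-- The second-order Huber function. -/
noncomputable def h2 (x : ℝ) : ℝ :=
  if |x| < 1 then -x ^ 4 / 8 + 3 * x ^ 2 / 4 + 3 / 8 else |x|

open Set

/-- `p` on `[a, b]`, continued by its tangent lines at the endpoints; `p'` stands for the
derivative of `p`. -/
noncomputable def tangentExtension (a b : ℝ) (p p' : ℝ → ℝ) (x : ℝ) : ℝ :=
  p (max a (min b x)) + (x - max a (min b x)) * p' (max a (min b x))

theorem HasDerivWithinAt.of_eqOn_of_isClosed {𝕜 F : Type*} [NontriviallyNormedField 𝕜]
    [NormedAddCommGroup F] [NormedSpace 𝕜 F] {f g : 𝕜 → F} {f' : 𝕜 → F} {s : Set 𝕜}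
    (hs : IsClosed s) (hfg : EqOn f g s) (hg : ∀ x ∈ s, HasDerivAt g (f' x) x) (x : 𝕜) :
    HasDerivWithinAt f (f' x) s x := by
  by_cases hx : x ∈ s
  · exact (hg x hx).hasDerivWithinAt.congr hfg (hfg hx)
  · exact HasFDerivWithinAt.of_notMem_closure (by rwa [hs.closure_eq])

section TangentExtension

variable {a b : ℝ} {p p' : ℝ → ℝ}

theorem hasDerivAt_tangentExtension (hab : a ≤ b) (hp : ∀ x ∈ Icc a b, HasDerivAt p (p' x) x)
    (x : ℝ) : HasDerivAt (tangentExtension a b p p') (p' (max a (min b x))) x := by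
  have clamp_left {y : ℝ} (hy : y ≤ a) : max a (min b y) = a :=
    max_eq_left ((min_le_right b y).trans hy)
  have clamp_mem {y : ℝ} (hy : y ∈ Icc a b) : max a (min b y) = y := by
    rw [min_eq_right hy.2, max_eq_right hy.1]
  have clamp_right {y : ℝ} (hy : b ≤ y) : max a (min b y) = b := by
    rw [min_eq_left hy, max_eq_right hab]
  have piece {s : Set ℝ} {g : ℝ → ℝ} (hs : IsClosed s) (hfg : EqOn (tangentExtension a b p p') g s)
      (hg : ∀ y ∈ s, HasDerivAt g (p' (max a (min b y))) y) :
      HasDerivWithinAt (tangentExtension a b p p') (p' (max a (min b x))) s x :=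
    .of_eqOn_of_isClosed (f' := fun y => p' (max a (min b y))) hs hfg hg x
  have left := piece (g := fun y => p a + (y - a) * p' a) (isClosed_Iic (a := a))
    (fun y hy => by simp only [tangentExtension, clamp_left hy])
    (fun y hy => by
      simpa [clamp_left hy] using
        ((hasDerivAt_id y).sub_const a).mul_const (p' a) |>.const_add (p a))
  have middle := piece (g := p) (isClosed_Icc (a := a) (b := b))
    (fun y hy => by simp [tangentExtension, clamp_mem hy])
    (fun y hy => by rw [clamp_mem hy]; exact hp y hy)
  have right := piece (g := fun y => p b + (y - b) * p' b) (isClosed_Ici (a := b))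
    (fun y hy => by simp only [tangentExtension, clamp_right hy])
    (fun y hy => by
      simpa [clamp_right hy] using
        ((hasDerivAt_id y).sub_const b).mul_const (p' b) |>.const_add (p b))
  rw [← hasDerivWithinAt_univ, ← Iic_union_Ici (a := b), ← Iic_union_Icc_eq_Iic hab]
  exact (left.union middle).union right

theorem tangentExtension_eq_comp_clamp (ha : p' a = 0) (hb : p' b = 0) :
    tangentExtension a b p p' = fun x => p (max a (min b x)) := by
  funext x
  rw [tangentExtension, add_eq_left, mul_eq_zero]
  rcases max_choice a (min b x) with h | h <;> rw [h]
  · exact .inr ha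
  · rcases min_choice b x with h' | h' <;> rw [h']
    · exact .inr hb
    · exact .inl (sub_self x)

end TangentExtension

theorem h2_eq_tangentExtension :
    h2 = tangentExtension (-1) 1 (fun y => -y ^ 4 / 8 + 3 * y ^ 2 / 4 + 3 / 8)
      (fun y => (3 * y - y ^ 3) / 2) := by
  funext x
  rw [h2, tangentExtension]
  split_ifs with hx
  · obtain ⟨hl, hr⟩ := abs_lt.1 hx
    rw [min_eq_right hr.le, max_eq_right hl.le]
    ring
  · rcases le_or_gt 0 x with h0 | h0
    · have h1 : 1 ≤ x := by rw [abs_of_nonneg h0] at hx; linarith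
      rw [abs_of_nonneg h0, min_eq_left h1, max_eq_right (by norm_num)]
      ring
    · have h1 : x ≤ -1 := by rw [abs_of_neg h0] at hx; linarith
      rw [abs_of_neg h0, min_eq_right (by linarith), max_eq_left h1]
      ring

theorem hasDerivAt_h2 (x : ℝ) :
    HasDerivAt h2 ((3 * max (-1) (min 1 x) - max (-1) (min 1 x) ^ 3) / 2) x := by
  have hP (y : ℝ) : HasDerivAt (fun y : ℝ => -y ^ 4 / 8 + 3 * y ^ 2 / 4 + 3 / 8)
      ((3 * y - y ^ 3) / 2) y := by
    refine ((((hasDerivAt_pow 4 y).neg.div_const 8).add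
      (((hasDerivAt_pow 2 y).const_mul 3).div_const 4)).add_const (3 / 8)).congr_deriv ?_
    norm_num; ring
  rw [h2_eq_tangentExtension]
  exact hasDerivAt_tangentExtension (by norm_num) (fun y _ => hP y) x

theorem hasDerivAt_deriv_h2 (x : ℝ) :
    HasDerivAt (deriv h2) (3 * (1 - max (-1) (min 1 x) ^ 2) / 2) x := by
  have hP' (y : ℝ) : HasDerivAt (fun y : ℝ => (3 * y - y ^ 3) / 2) (3 * (1 - y ^ 2) / 2) y := by
    refine ((((hasDerivAt_id' y).const_mul 3).sub (hasDerivAt_pow 3 y)).div_const 2).congr_deriv ?_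
    norm_num; ring
  have hderiv : deriv h2 = tangentExtension (-1) 1 (fun y => (3 * y - y ^ 3) / 2)
      (fun y => 3 * (1 - y ^ 2) / 2) := by
    rw [tangentExtension_eq_comp_clamp (by norm_num) (by norm_num)]
    exact funext fun x => (hasDerivAt_h2 x).deriv
  rw [hderiv]
  exact hasDerivAt_tangentExtension (by norm_num) (fun y _ => hP' y) x

theorem h2_smooth_and_convex : ContDiff ℝ 2 h2 ∧ ConvexOn ℝ Set.univ h2 := by
  have hdiff : Differentiable ℝ h2 := fun x => (hasDerivAt_h2 x).differentiableAt
  have hdiff' : Differentiable ℝ (deriv h2) := fun x => (hasDerivAt_deriv_h2 x).differentiableAt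
  have hderiv2 : deriv (deriv h2) = fun x => 3 * (1 - max (-1) (min 1 x) ^ 2) / 2 :=
    funext fun x => (hasDerivAt_deriv_h2 x).deriv
  constructor
  · rw [show (2 : WithTop ℕ∞) = 1 + 1 from rfl, contDiff_succ_iff_deriv, contDiff_one_iff_deriv,
      hderiv2]
    exact ⟨hdiff, by simp, hdiff', by fun_prop⟩
  · refine convexOn_univ_of_deriv2_nonneg hdiff hdiff' fun x => ?_
    have hclamp : |max (-1) (min 1 x)| ≤ 1 :=
      abs_le.2 ⟨le_max_left _ _, max_le (by norm_num) (min_le_left _ _)⟩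
    rw [Function.iterate_succ_apply, Function.iterate_one, hderiv2]
    nlinarith [(sq_le_one_iff_abs_le_one _).2 hclamp]
end

section
/- Let f : ℝ^q → ℝ be given by f(x) = Σ_{i=1}^q h₂(x_i) where h₂ is the second-order Huber function, and let b ≥ 1 with q = ⌊b⌋. Then any maximizer x⁺ of ‖∇f(x)‖² subject to f(x) = b satisfies ∇f(x⁺) = (±1,...,±1) and ∇²f(x⁺) = 0; in particular the gradient direction at x⁺ is not a Newton direction. -/
open Set

noncomputable def h2Deriv (x : ℝ) : ℝ :=
  if |x| < 1 then (3 * x - x ^ 3) / 2 else Real.sign x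

theorem h2_neg (x : ℝ) : h2 (-x) = h2 x := by
  simp only [h2, abs_neg]; ring_nf

theorem h2Deriv_neg (x : ℝ) : h2Deriv (-x) = -h2Deriv x := by
  simp only [h2Deriv, abs_neg, Real.sign_neg]; split_ifs <;> ring

theorem h2_eqOn_Icc : EqOn h2 (fun x => -x ^ 4 / 8 + 3 * x ^ 2 / 4 + 3 / 8) (Icc (-1) 1) := by
  intro x hx
  rcases (abs_le.2 hx).lt_or_eq with h | h
  · simp [h2, h]
  · rcases abs_eq (zero_le_one' ℝ) |>.1 h with rfl | rfl <;> norm_num [h2]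

theorem h2_eqOn_Ici : EqOn h2 id (Ici 1) := fun x (hx : 1 ≤ x) => by
  simp [h2, abs_of_pos (zero_lt_one.trans_le hx), hx]

theorem h2Deriv_eqOn_Icc : EqOn h2Deriv (fun x => (3 * x - x ^ 3) / 2) (Icc (-1) 1) := by
  intro x hx
  rcases (abs_le.2 hx).lt_or_eq with h | h
  · simp [h2Deriv, h]
  · rcases abs_eq (zero_le_one' ℝ) |>.1 h with rfl | rfl <;> norm_num [h2Deriv, Real.sign_of_neg]

theorem h2Deriv_eqOn_Ici : EqOn h2Deriv 1 (Ici 1) := fun x (hx : 1 ≤ x) => by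
  have hx0 := zero_lt_one.trans_le hx
  simp [h2Deriv, abs_of_pos hx0, hx, Real.sign_of_pos hx0]

theorem abs_h2Deriv_lt_one {x : ℝ} (hx : |x| < 1) : |h2Deriv x| < 1 := by
  obtain ⟨hl, hr⟩ := abs_lt.1 hx
  rw [h2Deriv, if_pos hx, abs_lt]
  -- `1 + (3x - x³)/2 = (1 + x)²(2 - x)/2` and `1 - (3x - x³)/2 = (1 - x)²(2 + x)/2`
  constructor <;>
    nlinarith [mul_pos (pow_pos (by linarith : 0 < 1 + x) 2) (by linarith : 0 < 2 - x),
      mul_pos (pow_pos (by linarith : 0 < 1 - x) 2) (by linarith : 0 < 2 + x)]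

theorem abs_h2Deriv_of_one_le_abs {x : ℝ} (hx : 1 ≤ |x|) : |h2Deriv x| = 1 := by
  rw [h2Deriv, if_neg hx.not_gt]
  rcases Real.sign_apply_eq_of_ne_zero x (abs_pos.1 (zero_lt_one.trans_le hx)) with h | h <;>
    simp [h]

theorem abs_h2Deriv_le_one (x : ℝ) : |h2Deriv x| ≤ 1 := by
  rcases lt_or_ge |x| 1 with hx | hx
  · exact (abs_h2Deriv_lt_one hx).le
  · exact (abs_h2Deriv_of_one_le_abs hx).le

theorem abs_h2Deriv_eq_one_iff {x : ℝ} : |h2Deriv x| = 1 ↔ 1 ≤ |x| :=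
  ⟨fun h => not_lt.1 fun hx => (abs_h2Deriv_lt_one hx).ne h, abs_h2Deriv_of_one_le_abs⟩

theorem hasDerivAt_h2_poly (x : ℝ) :
    HasDerivAt (fun x => -x ^ 4 / 8 + 3 * x ^ 2 / 4 + 3 / 8) ((3 * x - x ^ 3) / 2) x := by
  refine ((((hasDerivAt_pow 4 x).neg.div_const 8).add
    (((hasDerivAt_pow 2 x).const_mul 3).div_const 4)).add_const (3 / 8 : ℝ)).congr_deriv ?_
  push_cast; ring

theorem hasDerivAt_h2Deriv_poly (x : ℝ) :
    HasDerivAt (fun x => (3 * x - x ^ 3) / 2) ((3 - 3 * x ^ 2) / 2) x := by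
  refine ((((hasDerivAt_id x).const_mul 3).sub (hasDerivAt_pow 3 x)).div_const 2).congr_deriv ?_
  push_cast; ring

theorem hasDerivAt_h2_of_abs_lt_one {x : ℝ} (hx : |x| < 1) : HasDerivAt h2 (h2Deriv x) x := by
  rw [h2Deriv_eqOn_Icc (abs_le.1 hx.le)]
  refine (hasDerivAt_h2_poly x).congr_of_eventuallyEq (h2_eqOn_Icc.eventuallyEq_of_mem ?_)
  exact Icc_mem_nhds (abs_lt.1 hx).1 (abs_lt.1 hx).2

theorem hasDerivAt_h2_of_one_le {x : ℝ} (hx : 1 ≤ x) : HasDerivAt h2 (h2Deriv x) x := by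
  rw [h2Deriv_eqOn_Ici hx]
  have hr : HasDerivWithinAt h2 1 (Ici 1) x :=
    (hasDerivAt_id x).hasDerivWithinAt.congr h2_eqOn_Ici (h2_eqOn_Ici hx)
  rcases hx.eq_or_lt with rfl | hx
  · have hl := (hasDerivAt_h2_poly 1).hasDerivWithinAt.congr h2_eqOn_Icc
      (h2_eqOn_Icc (by norm_num))
    norm_num at hl
    exact (hl.union hr).hasDerivAt
      (by rw [Icc_union_Ici_eq_Ici (by norm_num)]; exact Ici_mem_nhds (by norm_num))
  · exact hr.hasDerivAt (Ici_mem_nhds hx)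

theorem hasDerivAt_h2_s10 (x : ℝ) : HasDerivAt h2 (h2Deriv x) x := by
  rcases lt_or_ge |x| 1 with hx | hx
  · exact hasDerivAt_h2_of_abs_lt_one hx
  rcases le_abs'.1 hx with hx | hx
  · have := (hasDerivAt_h2_of_one_le (le_neg.1 hx)).comp x (hasDerivAt_neg x)
    simpa [Function.comp_def, h2_neg, h2Deriv_neg] using this
  · exact hasDerivAt_h2_of_one_le hx

theorem hasDerivAt_h2Deriv_of_one_le {x : ℝ} (hx : 1 ≤ x) : HasDerivAt h2Deriv 0 x := by
  have hr : HasDerivWithinAt h2Deriv 0 (Ici 1) x :=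
    (hasDerivAt_const x 1).hasDerivWithinAt.congr h2Deriv_eqOn_Ici (h2Deriv_eqOn_Ici hx)
  rcases hx.eq_or_lt with rfl | hx
  · have hl := (hasDerivAt_h2Deriv_poly 1).hasDerivWithinAt.congr h2Deriv_eqOn_Icc
      (h2Deriv_eqOn_Icc (by norm_num))
    norm_num at hl
    exact (hl.union hr).hasDerivAt
      (by rw [Icc_union_Ici_eq_Ici (by norm_num)]; exact Ici_mem_nhds (by norm_num))
  · exact hr.hasDerivAt (Ici_mem_nhds hx)

theorem hasDerivAt_h2Deriv_of_one_le_abs {x : ℝ} (hx : 1 ≤ |x|) : HasDerivAt h2Deriv 0 x := by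
  rcases le_abs'.1 hx with hx | hx
  · have := ((hasDerivAt_h2Deriv_of_one_le (le_neg.1 hx)).comp x (hasDerivAt_neg x)).neg
    simpa [Function.comp_def, h2Deriv_neg, Pi.neg_def] using this
  · exact hasDerivAt_h2Deriv_of_one_le hx

section Separable

variable {ι : Type*} [Fintype ι] {φ φ' : ℝ → ℝ}

theorem hasGradientAt_sum_apply (hφ : ∀ t, HasDerivAt φ (φ' t) t) (x : EuclideanSpace ℝ ι) :
    HasGradientAt (fun y : EuclideanSpace ℝ ι => ∑ i, φ (y i))
      (WithLp.toLp 2 fun i => φ' (x i)) x := by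
  rw [hasGradientAt_iff_hasFDerivAt]
  have hdual : InnerProductSpace.toDual ℝ _ (WithLp.toLp 2 fun i => φ' (x i)) =
      ∑ i, φ' (x i) • EuclideanSpace.proj i := by
    ext y; simp [PiLp.inner_apply, mul_comm]
  rw [hdual]
  exact HasFDerivAt.fun_sum fun i _ =>
    (hφ (x i)).comp_hasFDerivAt x (EuclideanSpace.proj (𝕜 := ℝ) i).hasFDerivAt

theorem gradient_sum_apply (hφ : ∀ t, HasDerivAt φ (φ' t) t) :
    gradient (fun y : EuclideanSpace ℝ ι => ∑ i, φ (y i)) =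
      fun x => WithLp.toLp 2 fun i => φ' (x i) :=
  funext fun x => (hasGradientAt_sum_apply hφ x).gradient

theorem hasFDerivAt_toLp_apply_zero {x : EuclideanSpace ℝ ι} (hφ' : ∀ i, HasDerivAt φ' 0 (x i)) :
    HasFDerivAt (fun y : EuclideanSpace ℝ ι => WithLp.toLp 2 fun i => φ' (y i))
      (0 : EuclideanSpace ℝ ι →L[ℝ] EuclideanSpace ℝ ι) x := by
  rw [← hasFDerivWithinAt_univ, hasFDerivWithinAt_piLp (𝕜 := ℝ)]
  intro i
  simpa [Function.comp_def] using
    (hφ' i).comp_hasFDerivAt x (EuclideanSpace.proj (𝕜 := ℝ) i).hasFDerivAt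

end Separable

theorem abs_eq_one_of_card_le_sum_sq {ι : Type*} [Fintype ι] {v : ι → ℝ} (hv : ∀ i, |v i| ≤ 1)
    (h : (Fintype.card ι : ℝ) ≤ ∑ i, v i ^ 2) (i : ι) : |v i| = 1 := by
  have hnonneg : ∀ j ∈ Finset.univ, 0 ≤ 1 - |v j| ^ 2 :=
    fun j _ => sub_nonneg.2 (pow_le_one₀ (abs_nonneg _) (hv j))
  have hsum : ∑ j, (1 - |v j| ^ 2) = 0 := by
    refine le_antisymm ?_ (Finset.sum_nonneg hnonneg)
    simpa [Finset.sum_sub_distrib] using h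
  have := (Finset.sum_eq_zero_iff_of_nonneg hnonneg).1 hsum i (Finset.mem_univ i)
  exact (pow_eq_one_iff_of_nonneg (abs_nonneg _) two_ne_zero).1 (by linarith)

theorem teleportation_not_newton_direction_general
    (b : ℝ) (hb : 1 ≤ b) (q : ℕ) (hq : q = ⌊b⌋₊)
    (f : EuclideanSpace ℝ (Fin q) → ℝ)
    (hf : ∀ x, f x = ∑ i, h2 (x i))
    (xp : EuclideanSpace ℝ (Fin q))
    (hmax : IsMaxOn (fun x => ‖gradient f x‖ ^ 2) {x | f x = b} xp) :
    (∀ i, |gradient f xp i| = 1) ∧ fderiv ℝ (gradient f) xp = 0 := by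
  obtain rfl : f = fun y => ∑ i, h2 (y i) := funext hf
  have hgrad := gradient_sum_apply (ι := Fin q) hasDerivAt_h2_s10
  have hq0 : (0 : ℝ) < q := by rw [hq]; exact_mod_cast Nat.floor_pos.2 hb
  have ht : 1 ≤ b / q := (one_le_div hq0).2 (hq ▸ Nat.floor_le (by linarith))
  have hc : (WithLp.toLp 2 fun _ => b / q : EuclideanSpace ℝ (Fin q)) ∈
      {x | ∑ i, h2 (x i) = b} := by
    simp only [mem_ofPred_eq, h2_eqOn_Ici ht, id_eq, Finset.sum_const, Finset.card_univ,
      Fintype.card_fin, nsmul_eq_mul]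
    field_simp
  have hunit : ∀ i, |h2Deriv (xp i)| = 1 := by
    refine abs_eq_one_of_card_le_sum_sq (fun i => abs_h2Deriv_le_one _) ?_
    have h1 : h2Deriv (b / q) ^ 2 = 1 := by
      rw [← sq_abs, abs_h2Deriv_of_one_le_abs (ht.trans (le_abs_self _)), one_pow]
    simpa [hgrad, EuclideanSpace.real_norm_sq_eq, h1] using hmax hc
  refine ⟨by simpa [hgrad] using hunit, ?_⟩
  rw [hgrad]
  exact (hasFDerivAt_toLp_apply_zero fun i =>
    hasDerivAt_h2Deriv_of_one_le_abs (abs_h2Deriv_eq_one_iff.1 (hunit i))).fderiv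

theorem teleportation_not_newton_direction
    (b : ℝ) (hb : 1 ≤ b) (q : ℕ) (hq : q = ⌊b⌋₊)
    (f : EuclideanSpace ℝ (Fin q) → ℝ)
    (hf : ∀ x, f x = ∑ i, h2 (x i))
    (xp : EuclideanSpace ℝ (Fin q))
    (hfeas : f xp = b)
    (hmax : IsMaxOn (fun x => ‖gradient f x‖ ^ 2) {x | f x = b} xp) :
    (∀ i, |gradient f xp i| = 1) ∧ fderiv ℝ (gradient f) xp = 0 :=
  teleportation_not_newton_direction_general b hb q hq f hf xp hmax
end

section
/- Let g : ℝ → ℝ be differentiable, φ : ℝ → ℝ positively homogeneous (φ(αβ) = αφ(β) for α > 0) with lim_{β→∞} φ(β) = ∞ and lim_{β→∞} φ'(β) < ∞, and let f(w₁, w₂) = g(w₂ φ(w₁ x)) for fixed x > 0 with w₁, w₂ > 0. Then f is invariant under the rescaling (w₁, w₂) ↦ (w₁/α, αw₂), and along this rescaling as α → ∞ the level set {(u,v): f(u,v) = f(w₁,w₂)} is unbounded; if moreover ∂g/∂v ≠ 0 at v = w₂φ(w₁x), the norm of the gradient of f diverges along this path. Hence sup of ‖∇f‖ over the level set is +∞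 and the teleportation problem has no finite solution. -/
/-!
The rescaling `(w₁, w₂) ↦ (w₁ / α, α w₂)` leaves `w₂ φ(w₁ x)` unchanged by positive homogeneity, so
`f` is constant along it while the second coordinate tends to infinity. Since `φ t = t φ 1` for
`t > 0`, near points with positive first coordinate `f v = g (φ 1 · x · v₀ v₁)`, whose partial derivative
in `v₀` is `g'(w₂ φ(w₁ x)) · φ 1 · x · v₁`: it grows linearly along the rescaling whenever
`g'(w₂ φ(w₁ x)) ≠ 0`, because `φ 1 > 0` follows from `φ → ∞`.
-/

open Filter Topology

theorem not_bddAbove_image_of_tendsto_atTop {α β γ : Type*} [Preorder γ] [NoMaxOrder γ]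
    {l : Filter α} [l.NeBot] {F : β → γ} {p : α → β} {s : Set β} (hF : Tendsto (F ∘ p) l atTop)
    (hps : ∀ᶠ a in l, p a ∈ s) : ¬ BddAbove (F '' s) := by
  rintro ⟨M, hM⟩
  obtain ⟨a, hFa, has⟩ := ((hF.eventually_gt_atTop M).and hps).exists
  exact (hM ⟨p a, has, rfl⟩).not_gt hFa

theorem not_isBounded_of_tendsto_norm_atTop {α E : Type*} [SeminormedAddCommGroup E]
    {l : Filter α} [l.NeBot] {p : α → E} {s : Set E}
    (hp : Tendsto (fun a => ‖p a‖) l atTop) (hps : ∀ᶠ a in l, p a ∈ s) :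
    ¬ Bornology.IsBounded s := by
  intro hs
  obtain ⟨C, hC⟩ := isBounded_iff_forall_norm_le.mp hs
  exact not_bddAbove_image_of_tendsto_atTop hp hps ⟨C, by rintro _ ⟨u, hu, rfl⟩; exact hC u hu⟩

theorem HasFDerivAt.norm_apply_le_norm_gradient_mul {F : Type*} [NormedAddCommGroup F]
    [InnerProductSpace ℝ F] [CompleteSpace F] {f : F → ℝ} {L : StrongDual ℝ F} {u : F}
    (hf : HasFDerivAt f L u) (v : F) : ‖L v‖ ≤ ‖gradient f u‖ * ‖v‖ := by
  rw [hf.hasGradientAt.gradient, LinearIsometryEquiv.norm_map]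
  exact L.le_opNorm v

section PositivelyHomogeneous

variable {φ : ℝ → ℝ}

theorem apply_eq_mul_apply_one (hφ : ∀ α : ℝ, 0 < α → ∀ β : ℝ, φ (α * β) = α * φ β) {t : ℝ}
    (ht : 0 < t) : φ t = t * φ 1 := by
  simpa using hφ t ht 1

theorem apply_one_pos (hφ : ∀ α : ℝ, 0 < α → ∀ β : ℝ, φ (α * β) = α * φ β)
    (htop : Tendsto φ atTop atTop) : 0 < φ 1 := by
  obtain ⟨t, ht, hφt⟩ := ((eventually_gt_atTop 0).and (htop.eventually_gt_atTop 0)).exists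
  rw [apply_eq_mul_apply_one hφ ht] at hφt
  exact pos_of_mul_pos_right hφt ht.le

theorem mul_mul_apply_div (hφ : ∀ α : ℝ, 0 < α → ∀ β : ℝ, φ (α * β) = α * φ β) {α : ℝ}
    (hα : 0 < α) (b t : ℝ) : α * b * φ (t / α) = b * φ t := by
  rw [div_eq_inv_mul, hφ α⁻¹ (inv_pos.mpr hα)]
  field_simp

theorem eventuallyEq_mul_apply_mul {ι : Type*} (hφ : ∀ α : ℝ, 0 < α → ∀ β : ℝ, φ (α * β) = α * φ β)
    {x : ℝ} (hx : 0 < x) {i j : ι} {u : EuclideanSpace ℝ ι} (hu : 0 < u i) :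
    (fun v : EuclideanSpace ℝ ι => v j * φ (v i * x)) =ᶠ[𝓝 u] fun v => φ 1 * x * (v i * v j) := by
  filter_upwards [(PiLp.continuous_apply 2 _ i).continuousAt.eventually (lt_mem_nhds hu)]
    with v hv
  rw [apply_eq_mul_apply_one hφ (mul_pos hv hx)]
  ring

end PositivelyHomogeneous

section GradientGrowth

variable {ι : Type*} [Fintype ι] [DecidableEq ι]

theorem abs_deriv_mul_le_norm_gradient {h : ℝ → ℝ} {f : EuclideanSpace ℝ ι → ℝ} {i j : ι}
    (hij : i ≠ j) {u : EuclideanSpace ℝ ι} (hh : DifferentiableAt ℝ h (u i * u j))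
    (hf : f =ᶠ[𝓝 u] fun v => h (v i * v j)) : |deriv h (u i * u j) * u j| ≤ ‖gradient f u‖ := by
  set πi := EuclideanSpace.proj (𝕜 := ℝ) (ι := ι) i
  set πj := EuclideanSpace.proj (𝕜 := ℝ) (ι := ι) j
  have hprod : HasFDerivAt (fun v : EuclideanSpace ℝ ι => v i * v j) (u i • πj + u j • πi) u :=
    πi.hasFDerivAt.mul πj.hasFDerivAt
  have hG := hh.hasDerivAt.comp_hasFDerivAt u hprod
  have hbound := (hG.congr_of_eventuallyEq hf).norm_apply_le_norm_gradient_mul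
    (EuclideanSpace.single i 1)
  simpa [πi, πj, hij] using hbound

theorem tendsto_norm_gradient_of_eventuallyEq_comp_mul {h : ℝ → ℝ} {f : EuclideanSpace ℝ ι → ℝ}
    {i j : ι} (hij : i ≠ j) {c : ℝ} (hh : DifferentiableAt ℝ h c) (hc : deriv h c ≠ 0)
    {p : ℝ → EuclideanSpace ℝ ι} (hpj : Tendsto (fun α => p α j) atTop atTop)
    (hp : ∀ᶠ α in atTop, p α i * p α j = c ∧ f =ᶠ[𝓝 (p α)] fun v => h (v i * v j)) :
    Tendsto (fun α => ‖gradient f (p α)‖) atTop atTop := by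
  refine tendsto_atTop_mono' atTop ?_ (hpj.const_mul_atTop (abs_pos.mpr hc))
  filter_upwards [hp] with α ⟨hpc, hfα⟩
  have hbound := abs_deriv_mul_le_norm_gradient hij (hpc ▸ hh) hfα
  rw [hpc, abs_mul] at hbound
  exact (mul_le_mul_of_nonneg_left (le_abs_self _) (abs_nonneg _)).trans hbound

end GradientGrowth

theorem relu_network_teleportation_illposed_general
    (g φ : ℝ → ℝ) (hg : Differentiable ℝ g)
    (hφhom : ∀ α : ℝ, 0 < α → ∀ β : ℝ, φ (α * β) = α * φ β)
    (hφtop : Tendsto φ atTop atTop)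
    (x w₁ w₂ : ℝ) (hx : 0 < x) (hw₁ : 0 < w₁) (hw₂ : 0 < w₂)
    (f : EuclideanSpace ℝ (Fin 2) → ℝ)
    (hf : ∀ u, f u = g (u 1 * φ (u 0 * x)))
    (w : EuclideanSpace ℝ (Fin 2)) (hw0 : w 0 = w₁) (hw1 : w 1 = w₂)
    (p : ℝ → EuclideanSpace ℝ (Fin 2))
    (hp : ∀ α, p α 0 = w₁ / α ∧ p α 1 = α * w₂) :
    (∀ α : ℝ, 0 < α → f (p α) = f w) ∧
      ¬ Bornology.IsBounded {u : EuclideanSpace ℝ (Fin 2) | f u = f w} ∧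
      (deriv g (w₂ * φ (w₁ * x)) ≠ 0 →
        Tendsto (fun α => ‖gradient f (p α)‖) atTop atTop) ∧
      (deriv g (w₂ * φ (w₁ * x)) ≠ 0 →
        ¬ BddAbove ((fun u => ‖gradient f u‖) ''
          {u : EuclideanSpace ℝ (Fin 2) | f u = f w})) := by
  have hinvariant : ∀ α : ℝ, 0 < α → f (p α) = f w := fun α hα => by
    rw [hf, hf, hw0, hw1, (hp α).1, (hp α).2, div_mul_eq_mul_div, mul_mul_apply_div hφhom hα]
  have hlevel : ∀ᶠ α in atTop, p α ∈ {u | f u = f w} :=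
    (eventually_gt_atTop 0).mono hinvariant
  have hp1 : Tendsto (fun α => p α 1) atTop atTop := by
    simpa only [(hp _).2] using tendsto_id.atTop_mul_const (f := fun α : ℝ => α) hw₂
  have hgrad : deriv g (w₂ * φ (w₁ * x)) ≠ 0 →
      Tendsto (fun α => ‖gradient f (p α)‖) atTop atTop := by
    intro hg'
    set k := φ 1 * x
    have hk : 0 < k := mul_pos (apply_one_pos hφhom hφtop) hx
    have hkw : k * (w₁ * w₂) = w₂ * φ (w₁ * x) := by
      rw [apply_eq_mul_apply_one hφhom (mul_pos hw₁ hx)]; ring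
    refine tendsto_norm_gradient_of_eventuallyEq_comp_mul (h := fun t => g (k * t)) (c := w₁ * w₂)
      (i := 0) (j := 1) (by decide) (hg.comp (differentiable_id.const_mul k) _) ?_ hp1 ?_
    · rw [deriv_comp_mul_left, hkw, smul_eq_mul]
      exact mul_ne_zero hk.ne' hg'
    · filter_upwards [eventually_gt_atTop 0] with α hα
      have hpα0 : 0 < p α 0 := by rw [(hp α).1]; positivity
      refine ⟨by rw [(hp α).1, (hp α).2]; field_simp, ?_⟩
      rw [show f = fun u => g (u 1 * φ (u 0 * x)) from funext hf]
      exact (eventuallyEq_mul_apply_mul hφhom hx hpα0).fun_comp g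
  refine ⟨hinvariant, ?_, hgrad, fun hg' => not_bddAbove_image_of_tendsto_atTop (hgrad hg') hlevel⟩
  exact not_isBounded_of_tendsto_norm_atTop
    (tendsto_atTop_mono (fun α => PiLp.norm_apply_le (p α) 1) (tendsto_norm_atTop_atTop.comp hp1))
    hlevel

theorem relu_network_teleportation_illposed
    (g φ : ℝ → ℝ) (hg : Differentiable ℝ g)
    (hφhom : ∀ α : ℝ, 0 < α → ∀ β : ℝ, φ (α * β) = α * φ β)
    (hφtop : Tendsto φ atTop atTop)
    (hφ' : ∃ C : ℝ, Tendsto (deriv φ) atTop (nhds C))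
    (x w₁ w₂ : ℝ) (hx : 0 < x) (hw₁ : 0 < w₁) (hw₂ : 0 < w₂)
    (f : EuclideanSpace ℝ (Fin 2) → ℝ)
    (hf : ∀ u, f u = g (u 1 * φ (u 0 * x)))
    (w : EuclideanSpace ℝ (Fin 2)) (hw0 : w 0 = w₁) (hw1 : w 1 = w₂)
    (p : ℝ → EuclideanSpace ℝ (Fin 2))
    (hp : ∀ α, p α 0 = w₁ / α ∧ p α 1 = α * w₂) :
    (∀ α : ℝ, 0 < α → f (p α) = f w) ∧
      ¬ Bornology.IsBounded {u : EuclideanSpace ℝ (Fin 2) | f u = f w} ∧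
      (deriv g (w₂ * φ (w₁ * x)) ≠ 0 →
        Tendsto (fun α => ‖gradient f (p α)‖) atTop atTop) ∧
      (deriv g (w₂ * φ (w₁ * x)) ≠ 0 →
        ¬ BddAbove ((fun u => ‖gradient f u‖) ''
          {u : EuclideanSpace ℝ (Fin 2) | f u = f w})) :=
  relu_network_teleportation_illposed_general g φ hg hφhom hφtop x w₁ w₂ hx hw₁ hw₂ f hf w hw0 hw1 p
    hp
end
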